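/- arXiv:1701.06539 — 2 statements merged into one kernel-verified Lean document; each statement's English description precedes it below -/
import Mathlib

section
/- There exists no scoring method on 4-player ranking problems satisfying neutrality, symmetry, strong order preservation, and self-consistency simultaneously. -/
open Finset

/-- A ranking problem: skew-symmetric results matrix `R`, symmetric
nonnegative-integer matches matrix `M`, with `|R i j| ≤ M i j`. -/
structure RP (n : ℕ) where
  R : Fin n → Fin n → ℝ
  M : Fin n → Fin n → ℕ
  skew : ∀ i j, R j i = - R i j
  symm : ∀ i j, M j i = M i j
  bound : ∀ i j, |R i j| ≤ (M i j : ℝ)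

/-- Sum of two ranking problems. -/
def RP.add {n : ℕ} (P Q : RP n) : RP n where
  R i j := P.R i j + Q.R i j
  M i j := P.M i j + Q.M i j
  skew i j := by rw [P.skew i j, Q.skew i j]; ring
  symm i j := by rw [P.symm i j, Q.symm i j]
  bound i j := by
    calc |P.R i j + Q.R i j| ≤ |P.R i j| + |Q.R i j| := abs_add_le _ _
      _ ≤ (P.M i j : ℝ) + (Q.M i j : ℝ) := add_le_add (P.bound i j) (Q.bound i j)
      _ = ((P.M i j + Q.M i j : ℕ) : ℝ) := by push_cast; ring

/-- The ranking problem with all results reversed. -/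
def RP.neg {n : ℕ} (P : RP n) : RP n where
  R i j := - P.R i j
  M := P.M
  skew i j := by rw [P.skew i j]
  symm := P.symm
  bound i j := by simpa using P.bound i j

/-- Relabelling the players by a permutation. -/
def RP.relabel {n : ℕ} (σ : Equiv.Perm (Fin n)) (P : RP n) : RP n where
  R i j := P.R (σ.symm i) (σ.symm j)
  M i j := P.M (σ.symm i) (σ.symm j)
  skew i j := P.skew _ _
  symm i j := P.symm _ _
  bound i j := P.bound _ _

/-- All players have played `m` matches. -/
def RPBalanced {n : ℕ} (P : RP n) (m : ℕ) : Prop := ∀ i, ∑ j, P.M i j = m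

/-- Symmetry (SYM): if all results are draws, all scores are equal. -/
def SYM {n : ℕ} (f : RP n → Fin n → ℝ) : Prop :=
  ∀ P : RP n, (∀ i j, P.R i j = 0) → ∀ i j, f P i = f P j

/-- Inversion (INV). -/
def INV {n : ℕ} (f : RP n → Fin n → ℝ) : Prop :=
  ∀ P : RP n, ∀ i j, f P i ≥ f P j ↔ f P.neg i ≤ f P.neg j

/-- Order preservation (OP). -/
def OP {n : ℕ} (f : RP n → Fin n → ℝ) : Prop :=
  ∀ P Q : RP n, ∀ m m' : ℕ, RPBalanced P m → RPBalanced Q m' →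
    ∀ i j, f P i ≥ f P j → f Q i ≥ f Q j →
      f (P.add Q) i ≥ f (P.add Q) j ∧
      ((f P i > f P j ∨ f Q i > f Q j) → f (P.add Q) i > f (P.add Q) j)

/-- Strong order preservation (SOP). -/
def SOP {n : ℕ} (f : RP n → Fin n → ℝ) : Prop :=
  ∀ P Q : RP n, ∀ i j, f P i ≥ f P j → f Q i ≥ f Q j →
      f (P.add Q) i ≥ f (P.add Q) j ∧
      ((f P i > f P j ∨ f Q i > f Q j) → f (P.add Q) i > f (P.add Q) j)

/-- Neutrality (NEU). -/
def NEU {n : ℕ} (f : RP n → Fin n → ℝ) : Prop :=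
  ∀ σ : Equiv.Perm (Fin n), ∀ P : RP n, ∀ i, f P i = f (P.relabel σ) (σ i)

/-- Independence of irrelevant matches (IIM). -/
def IIM {n : ℕ} (f : RP n → Fin n → ℝ) : Prop :=
  ∀ P Q : RP n, ∀ i j k l : Fin n,
    i ≠ k → i ≠ l → j ≠ k → j ≠ l → i ≠ j → k ≠ l →
    (∀ a b, ¬((a = k ∧ b = l) ∨ (a = l ∧ b = k)) → P.R a b = Q.R a b ∧ P.M a b = Q.M a b) →
    f P i ≥ f P j → f Q i ≥ f Q j

/-- A decomposition of a ranking problem into per-match results: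
match `t` between `a` and `b` (for `t < M a b`) has result `res a b t ∈ [-1,1]`,
and the results sum to `R a b`. -/
structure RP.Decomp {n : ℕ} (P : RP n) where
  res : Fin n → Fin n → ℕ → ℝ
  skew : ∀ a b t, res b a t = - res a b t
  bound : ∀ a b t, t < P.M a b → |res a b t| ≤ 1
  sum : ∀ a b, ∑ t ∈ Finset.range (P.M a b), res a b t = P.R a b

/-- The opponent multiset of player `i`: `M i k` copies of each `k`. -/
def RP.Matches {n : ℕ} (P : RP n) (i : Fin n) := Σ k : Fin n, Fin (P.M i k)

/-- Self-consistency (SC): if there is a bijection between the opponent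
multisets of `i` and `j` matching each match of `i` to a match of `j` with a
weakly smaller per-match result against a weakly weaker opponent, then
`f i ≥ f j`, strictly if some comparison is strict. -/
def SC {n : ℕ} (f : RP n → Fin n → ℝ) : Prop :=
  ∀ P : RP n, ∀ d : P.Decomp, ∀ i j : Fin n, ∀ e : P.Matches i ≃ P.Matches j,
    (∀ m : P.Matches i,
      d.res i m.1 m.2.1 ≥ d.res j (e m).1 (e m).2.1 ∧ f P m.1 ≥ f P (e m).1) →
    f P i ≥ f P j ∧
    ((∃ m : P.Matches i,
        d.res i m.1 m.2.1 > d.res j (e m).1 (e m).2.1 ∨ f P m.1 > f P (e m).1) →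
      f P i > f P j)


/-!
Neutrality, symmetry and strong order preservation force equal scores on two players whose
results are invariant under swapping them, whatever the numbers of matches: if `P` favoured one
of them, then `P` plus its reversal, relabelled by the swap if needed, would still favour that
player by SOP, yet consist of draws only.

In the key problem players 0 and 1 each beat 2 once and draw twice, but 0 draws 3 twice where 1
draws 2 and 3 once each; the results matrix only records net results, so 0 and 1 tie. Player 3
only draws, while 2 loses to 0 and to 1 and draws with 1, so SC with 0 ≥ 1 puts 3 strictly above 2.
Then SC, matching the draw of 0 against 3 with the draw of 1 against 2, puts 0 strictly above 1.
-/

section ScoreSwap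

variable {n : ℕ} {f : RP n → Fin n → ℝ}

lemma RP.add_neg_R (P : RP n) (a b : Fin n) : (P.add P.neg).R a b = 0 :=
  add_neg_cancel _

lemma SOP.le_of_add_R_eq_zero (hSOP : SOP f) (hSYM : SYM f) {P Q : RP n}
    (hPQ : ∀ a b, (P.add Q).R a b = 0) {i j : Fin n} (hQ : f Q j ≤ f Q i) :
    f P i ≤ f P j := by
  by_contra! hP
  exact ((hSOP P Q i j hP.le hQ).2 (Or.inl hP)).ne' (hSYM _ hPQ i j)

lemma score_le_of_R_swap_invariant (hNEU : NEU f) (hSYM : SYM f) (hSOP : SOP f) {P : RP n}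
    {i j : Fin n} (hR : ∀ a b, P.R (Equiv.swap i j a) (Equiv.swap i j b) = P.R a b) :
    f P i ≤ f P j := by
  rcases le_total (f P.neg j) (f P.neg i) with hneg | hneg
  · exact hSOP.le_of_add_R_eq_zero hSYM P.add_neg_R hneg
  · refine hSOP.le_of_add_R_eq_zero hSYM (Q := P.neg.relabel (Equiv.swap i j)) ?_ ?_
    · intro a b
      simp only [RP.add, RP.neg, RP.relabel, Equiv.symm_swap, hR, add_neg_cancel]
    · have hi := hNEU (Equiv.swap i j) P.neg i
      have hj := hNEU (Equiv.swap i j) P.neg j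
      rw [Equiv.swap_apply_left] at hi
      rw [Equiv.swap_apply_right] at hj
      rwa [← hi, ← hj]

lemma score_eq_of_R_swap_invariant (hNEU : NEU f) (hSYM : SYM f) (hSOP : SOP f) {P : RP n}
    {i j : Fin n} (hR : ∀ a b, P.R (Equiv.swap i j a) (Equiv.swap i j b) = P.R a b) :
    f P i = f P j :=
  le_antisymm (score_le_of_R_swap_invariant hNEU hSYM hSOP hR)
    (score_le_of_R_swap_invariant hNEU hSYM hSOP (Equiv.swap_comm i j ▸ hR))

end ScoreSwap

section Matches

variable {n : ℕ}

def RP.decompFirst (P : RP n) (hR : ∀ a b, |P.R a b| ≤ 1) : P.Decomp where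
  res a b t := if t = 0 then P.R a b else 0
  skew a b t := by split_ifs <;> simp [P.skew a b]
  bound a b t _ := by split_ifs <;> simp [hR a b]
  sum a b := by
    rcases Nat.eq_zero_or_pos (P.M a b) with hM | hM
    · simpa [hM] using (abs_nonpos_iff.mp (by simpa [hM] using P.bound a b)).symm
    · simp [Finset.sum_ite_eq', hM]

instance (P : RP n) (i : Fin n) : Fintype (P.Matches i) :=
  inferInstanceAs (Fintype (Σ k, Fin (P.M i k)))

instance (P : RP n) (i : Fin n) : DecidableEq (P.Matches i) :=
  inferInstanceAs (DecidableEq (Σ k, Fin (P.M i k)))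

end Matches

@[simps R]
def keyProblem : RP 4 where
  R := ![![0, 0, 1, 0], ![0, 0, 1, 0], ![-1, -1, 0, 0], ![0, 0, 0, 0]]
  M := ![![0, 0, 1, 2], ![0, 0, 2, 1], ![1, 2, 0, 0], ![2, 1, 0, 0]]
  skew i j := by fin_cases i <;> fin_cases j <;> simp
  symm := by decide
  bound i j := by fin_cases i <;> fin_cases j <;> simp

lemma keyProblem_R_swap (a b : Fin 4) :
    keyProblem.R (Equiv.swap 0 1 a) (Equiv.swap 0 1 b) = keyProblem.R a b := by
  fin_cases a <;> fin_cases b <;> simp [Equiv.swap_apply_of_ne_of_ne]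

lemma keyProblem_abs_R_le_one (a b : Fin 4) : |keyProblem.R a b| ≤ 1 := by
  fin_cases a <;> fin_cases b <;> simp

def keyDecomp : keyProblem.Decomp := keyProblem.decompFirst keyProblem_abs_R_le_one

/-- Matches the draw of 0 against 3 with the draw of 1 against 2, and the rest identically. -/
noncomputable def matchesZeroToOne : keyProblem.Matches 0 ≃ keyProblem.Matches 1 :=
  Equiv.ofBijective (fun m : keyProblem.Matches 0 =>
      if m.1 = 2 then ⟨2, ⟨0, by decide⟩⟩
      else if m.2.1 = 0 then ⟨2, ⟨1, by decide⟩⟩ else ⟨3, ⟨0, by decide⟩⟩)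
    (by decide)

/-- Matches the draws of 3 against 0 with the losses of 2, and the draw against 1 identically. -/
noncomputable def matchesThreeToTwo : keyProblem.Matches 3 ≃ keyProblem.Matches 2 :=
  Equiv.ofBijective (fun m : keyProblem.Matches 3 =>
      if m.1 = 1 then ⟨1, ⟨1, by decide⟩⟩
      else if m.2.1 = 0 then ⟨0, ⟨0, by decide⟩⟩ else ⟨1, ⟨0, by decide⟩⟩)
    (by decide)

section SelfConsistency

variable {f : RP 4 → Fin 4 → ℝ}

lemma SC.keyProblem_one_lt_zero (hSC : SC f) (h : f keyProblem 2 < f keyProblem 3) :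
    f keyProblem 1 < f keyProblem 0 := by
  refine (hSC keyProblem keyDecomp 0 1 matchesZeroToOne ?_).2 ⟨⟨3, ⟨0, by decide⟩⟩, Or.inr ?_⟩
  · intro m
    fin_cases m <;> simp [matchesZeroToOne, keyDecomp, RP.decompFirst, h.le]
  · simpa [matchesZeroToOne] using h

lemma SC.keyProblem_two_lt_three (hSC : SC f) (h : f keyProblem 1 ≤ f keyProblem 0) :
    f keyProblem 2 < f keyProblem 3 := by
  refine (hSC keyProblem keyDecomp 3 2 matchesThreeToTwo ?_).2 ⟨⟨0, ⟨0, by decide⟩⟩, Or.inl ?_⟩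
  · intro m
    fin_cases m <;> simp [matchesThreeToTwo, keyDecomp, RP.decompFirst, h]
  · simp [matchesThreeToTwo, keyDecomp, RP.decompFirst]

end SelfConsistency

theorem no_neu_sym_sop_sc :
    ¬ ∃ f : RP 4 → Fin 4 → ℝ, NEU f ∧ SYM f ∧ SOP f ∧ SC f := by
  rintro ⟨f, hNEU, hSYM, hSOP, hSC⟩
  have h01 : f keyProblem 0 = f keyProblem 1 :=
    score_eq_of_R_swap_invariant hNEU hSYM hSOP keyProblem_R_swap
  have h23 : f keyProblem 2 < f keyProblem 3 := hSC.keyProblem_two_lt_three h01.ge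
  exact (hSC.keyProblem_one_lt_zero h23).ne' h01
end

section
/- There exists a self-consistent scoring method on 4-player ranking problems that is neither neutral nor symmetric. Concretely, on the ranking problem where X_1–X_2, X_2–X_3, X_3–X_4 are single drawn matches (a path of draws), the assignment f_i = 4 − i is consistent with self-consistency, yet neutrality would force f_1 = f_4 and f_2 = f_3, and symmetry would force all scores equal. -/
open Finset

/-! The scores `3, 2, 1, 0` along the path of draws satisfy every constraint of self-consistency:
such a constraint needs a bijection between the opponents of two players, hence equal numbers of
matches, and it then only compares the total scores of their opponents. Elsewhere the method is the
generalized row sum `x = ε (s + M x)`, which is self-consistent because a constraint's hypothesis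
says precisely that, match by match, the summands of `s i + (M x) i` dominate those of
`s j + (M x) j`. -/

namespace RP

variable {n : ℕ}

theorem ext {P Q : RP n} (hR : P.R = Q.R) (hM : P.M = Q.M) : P = Q := by
  cases P
  cases Q
  subst hR hM
  rfl

variable (P : RP n)

instance (i : Fin n) : Fintype (P.Matches i) :=
  inferInstanceAs (Fintype (Σ k : Fin n, Fin (P.M i k)))

def SelfConsistentAt (x : Fin n → ℝ) : Prop :=
  ∀ d : P.Decomp, ∀ i j : Fin n, ∀ e : P.Matches i ≃ P.Matches j,
    (∀ m : P.Matches i,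
      d.res i m.1 m.2.1 ≥ d.res j (e m).1 (e m).2.1 ∧ x m.1 ≥ x (e m).1) →
    x i ≥ x j ∧
    ((∃ m : P.Matches i,
        d.res i m.1 m.2.1 > d.res j (e m).1 (e m).2.1 ∨ x m.1 > x (e m).1) →
      x i > x j)

/-- The results of `i` plus the scores `x` of its opponents, counted once per match. -/
def strength (x : Fin n → ℝ) (i : Fin n) : ℝ := ∑ k, (P.R i k + P.M i k * x k)

theorem card_matches (i : Fin n) : Fintype.card (P.Matches i) = ∑ k, P.M i k := by
  show Fintype.card (Σ k : Fin n, Fin (P.M i k)) = _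
  simp [Fintype.card_sigma]

theorem sum_matches_eq_strength (d : P.Decomp) (x : Fin n → ℝ) (i : Fin n) :
    ∑ m : P.Matches i, (d.res i m.1 m.2.1 + x m.1) = P.strength x i := by
  show ∑ m : (Σ k : Fin n, Fin (P.M i k)), _ = _
  rw [← univ_sigma_univ, sum_sigma]
  refine sum_congr rfl fun k _ => ?_
  rw [Fin.sum_univ_eq_sum_range (fun t => d.res i k t + x k), sum_add_distrib, d.sum,
    sum_const, card_range, nsmul_eq_mul]

/-- A constraint of self-consistency between `i` and `j` can only arise when they have played
equally many matches, and its conclusion then follows from comparing their strengths. -/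
theorem selfConsistentAt_of_strength {x : Fin n → ℝ}
    (h : ∀ i j, ∑ k, P.M i k = ∑ k, P.M j k →
      (P.strength x j ≤ P.strength x i → x j ≤ x i) ∧
      (P.strength x j < P.strength x i → x j < x i)) :
    P.SelfConsistentAt x := by
  intro d i j e hyp
  have hdeg : ∑ k, P.M i k = ∑ k, P.M j k := by
    rw [← card_matches, ← card_matches, Fintype.card_congr e]
  have hj : P.strength x j = ∑ m, (d.res j (e m).1 (e m).2.1 + x (e m).1) := by
    rw [← sum_matches_eq_strength P d, ← e.sum_comp]
  have hle : ∀ m : P.Matches i,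
      d.res j (e m).1 (e m).2.1 + x (e m).1 ≤ d.res i m.1 m.2.1 + x m.1 :=
    fun m => add_le_add (hyp m).1 (hyp m).2
  refine ⟨(h i j hdeg).1 ?_, fun ⟨m, hm⟩ => (h i j hdeg).2 ?_⟩
  · rw [hj, ← sum_matches_eq_strength P d]
    exact sum_le_sum fun m _ => hle m
  · rw [hj, ← sum_matches_eq_strength P d]
    refine sum_lt_sum (fun m _ => hle m) ⟨m, mem_univ m, ?_⟩
    rcases hm with hres | hopp
    · linarith [(hyp m).2]
    · linarith [(hyp m).1]

/-- The weight `ε` of the generalized row sum, small enough that `ε * #matches i ≤ 1 / 2`. -/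
noncomputable def rowSumWeight : ℝ := (2 * (∑ i, ∑ k, (P.M i k : ℝ) + 1))⁻¹

theorem rowSumWeight_pos : 0 < P.rowSumWeight := by
  unfold rowSumWeight
  positivity

theorem rowSumWeight_mul_le (i : Fin n) : P.rowSumWeight * ∑ k, (P.M i k : ℝ) ≤ 1 / 2 := by
  have hi : ∑ k, (P.M i k : ℝ) ≤ ∑ i, ∑ k, (P.M i k : ℝ) :=
    single_le_sum (f := fun i => ∑ k, (P.M i k : ℝ)) (fun _ _ => by positivity) (mem_univ i)
  rw [rowSumWeight, ← div_eq_inv_mul, div_le_iff₀ (by positivity)]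
  linarith

theorem dist_strength_le (x y : Fin n → ℝ) (i : Fin n) :
    dist (P.strength x i) (P.strength y i) ≤ (∑ k, (P.M i k : ℝ)) * dist x y := by
  have hdiff : P.strength x i - P.strength y i = ∑ k, (P.M i k : ℝ) * (x k - y k) := by
    simp only [strength, ← sum_sub_distrib]
    exact sum_congr rfl fun k _ => by ring
  rw [Real.dist_eq, hdiff, sum_mul]
  refine (abs_sum_le_sum_abs _ _).trans (sum_le_sum fun k _ => ?_)
  rw [abs_mul, Nat.abs_cast, ← Real.dist_eq]
  exact mul_le_mul_of_nonneg_left (dist_le_pi_dist x y k) (by positivity)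

theorem contractingWith_strength :
    ContractingWith (1 / 2) fun x i => P.rowSumWeight * P.strength x i := by
  refine ⟨by rw [← NNReal.coe_lt_coe]; norm_num, LipschitzWith.of_dist_le_mul fun x y => ?_⟩
  refine (dist_pi_le_iff (by positivity)).2 fun i => ?_
  rw [Real.dist_eq, ← mul_sub, abs_mul, abs_of_pos P.rowSumWeight_pos, ← Real.dist_eq]
  calc P.rowSumWeight * dist (P.strength x i) (P.strength y i)
      ≤ P.rowSumWeight * ((∑ k, (P.M i k : ℝ)) * dist x y) :=
        mul_le_mul_of_nonneg_left (P.dist_strength_le x y i) P.rowSumWeight_pos.le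
    _ ≤ 1 / 2 * dist x y := by
        rw [← mul_assoc]
        exact mul_le_mul_of_nonneg_right (P.rowSumWeight_mul_le i) dist_nonneg
    _ = ((1 / 2 : NNReal) : ℝ) * dist x y := by norm_num

/-- The generalized row sum: the solution of `x = ε (s + M x)`. -/
noncomputable def genRowSum : Fin n → ℝ :=
  ContractingWith.fixedPoint _ P.contractingWith_strength

theorem genRowSum_eq (i : Fin n) :
    P.genRowSum i = P.rowSumWeight * P.strength P.genRowSum i :=
  congrFun (P.contractingWith_strength.fixedPoint_isFixedPt).symm i

theorem selfConsistentAt_genRowSum : P.SelfConsistentAt P.genRowSum :=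
  P.selfConsistentAt_of_strength fun i j _ => by
    rw [P.genRowSum_eq i, P.genRowSum_eq j]
    exact ⟨fun h => mul_le_mul_of_nonneg_left h P.rowSumWeight_pos.le,
      fun h => mul_lt_mul_of_pos_left h P.rowSumWeight_pos⟩

end RP

/-- Single drawn matches between `X_1` and `X_2`, `X_2` and `X_3`, `X_3` and `X_4`. -/
def pathOfDraws : RP 4 where
  R _ _ := 0
  M i j := if (i : ℕ) + 1 = j ∨ (j : ℕ) + 1 = i then 1 else 0
  skew _ _ := neg_zero.symm
  symm _ _ := by simp only [or_comm]
  bound _ _ := by rw [abs_zero]; positivity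

def pathScore (i : Fin 4) : ℕ := 3 - i

theorem pathScore_strength_criterion : ∀ i j : Fin 4,
    ∑ k, pathOfDraws.M i k = ∑ k, pathOfDraws.M j k →
    (∑ k, pathOfDraws.M j k * pathScore k ≤ ∑ k, pathOfDraws.M i k * pathScore k →
      pathScore j ≤ pathScore i) ∧
    (∑ k, pathOfDraws.M j k * pathScore k < ∑ k, pathOfDraws.M i k * pathScore k →
      pathScore j < pathScore i) := by
  decide

theorem strength_pathOfDraws (x : Fin 4 → ℕ) (i : Fin 4) :
    pathOfDraws.strength (fun k => x k) i = ((∑ k, pathOfDraws.M i k * x k : ℕ) : ℝ) := by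
  simp [RP.strength, pathOfDraws]

theorem selfConsistentAt_pathScore :
    pathOfDraws.SelfConsistentAt fun i => (pathScore i : ℝ) := by
  refine pathOfDraws.selfConsistentAt_of_strength fun i j hdeg => ?_
  simp only [strength_pathOfDraws, Nat.cast_le, Nat.cast_lt]
  exact pathScore_strength_criterion i j hdeg

theorem relabel_revPerm_pathOfDraws : pathOfDraws.relabel Fin.revPerm = pathOfDraws :=
  RP.ext rfl <| by
    funext i j
    revert i j
    decide

open Classical in
noncomputable def pathBiasedRowSum (P : RP 4) : Fin 4 → ℝ :=
  if P = pathOfDraws then fun i => (pathScore i : ℝ) else P.genRowSum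

theorem pathBiasedRowSum_pathOfDraws :
    pathBiasedRowSum pathOfDraws = fun i => (pathScore i : ℝ) :=
  if_pos rfl

theorem sc_without_neu_sym :
    ∃ f : RP 4 → Fin 4 → ℝ, SC f ∧ ¬ NEU f ∧ ¬ SYM f := by
  refine ⟨pathBiasedRowSum, fun P => ?_, fun hneu => ?_, fun hsym => ?_⟩
  · by_cases hP : P = pathOfDraws
    · subst hP
      rw [pathBiasedRowSum_pathOfDraws]
      exact selfConsistentAt_pathScore
    · rw [pathBiasedRowSum, if_neg hP]
      exact P.selfConsistentAt_genRowSum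
  · have h := hneu Fin.revPerm pathOfDraws 0
    rw [relabel_revPerm_pathOfDraws, pathBiasedRowSum_pathOfDraws] at h
    norm_num [pathScore] at h
  · have h := hsym pathOfDraws (fun _ _ => rfl) 0 1
    rw [pathBiasedRowSum_pathOfDraws] at h
    norm_num [pathScore] at h
end
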